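/- Let Ω ⊂ ℝⁿ be a bounded open set, q ∈ L^∞(Ω), and suppose ∫_Ω q v w dx = 0 for all pairs of functions v, w of the form v(x) = e^{(x·(α+iβ))/h}(e^{−ix·ξ} + r₁(x)), w(x) = e^{−(x·(α+iβ))/h}(1 + r₂(x)), where ξ ∈ ℝⁿ, α,β ∈ ℝⁿ are unit vectors with ξ·α = ξ·β = α·β = 0, and ‖r₁‖_{L^∞(Ω)}, ‖r₂‖_{L^∞(Ω)} → 0 as h → 0. Then ∫_Ω q(x) e^{−ix·ξ} dx = 0 for every such ξ; in particular if n ≥ 3 so that for every ξ ∈ ℝⁿ such α, β exist, then q = 0 a.e. in Ω. -/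

import Mathlib

/-!
Taking both remainders to be zero, the weights `e^{±x·(α+iβ)/h}` cancel and the hypothesis is
already the vanishing of `∫_Ω q e^{-ix·ξ}`. When `n ≥ 3` every `ξ` admits such `α, β`, so the
Fourier transform of the finite complex measure `q · 1_Ω dx` vanishes identically. Pairing it with
the inverse Fourier transform of a test function (Fubini) shows that `q` integrates to zero against
every smooth compactly supported function, hence `q = 0` a.e. on `Ω`.
-/

open MeasureTheory Complex FourierTransform RealInnerProductSpace Module
open scoped ContDiff SchwartzMap

theorem exists_orthonormal_orthogonal_of_finrank_le {E : Type*} [NormedAddCommGroup E]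
    [InnerProductSpace ℝ E] [FiniteDimensional ℝ E] {k : ℕ} (hk : k + 1 ≤ finrank ℝ E) (ξ : E) :
    ∃ v : Fin k → E, Orthonormal ℝ v ∧ ∀ i, ⟪ξ, v i⟫ = 0 := by
  have hW : k ≤ finrank ℝ (ℝ ∙ ξ)ᗮ := by
    have := (ℝ ∙ ξ).finrank_add_finrank_orthogonal
    have : finrank ℝ (ℝ ∙ ξ) ≤ 1 := by simpa using finrank_span_le_card ({ξ} : Set E)
    omega
  let b := stdOrthonormalBasis ℝ (ℝ ∙ ξ)ᗮ
  refine ⟨fun i => (b (Fin.castLE hW i) : E),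
    (b.orthonormal.comp _ (Fin.castLE_injective hW)).comp_linearIsometry (ℝ ∙ ξ)ᗮ.subtypeₗᵢ,
    fun i => ?_⟩
  exact (b (Fin.castLE hW i)).2 ξ (Submodule.mem_span_singleton_self ξ)

theorem exists_orthonormal_pair_orthogonal_coords {n : ℕ} (hn : 3 ≤ n) (ξ : Fin n → ℝ) :
    ∃ α β : Fin n → ℝ, (∑ j, α j ^ 2 = 1) ∧ (∑ j, β j ^ 2 = 1) ∧
      (∑ j, ξ j * α j = 0) ∧ (∑ j, ξ j * β j = 0) ∧ (∑ j, α j * β j = 0) := by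
  obtain ⟨v, hv, hξv⟩ := exists_orthonormal_orthogonal_of_finrank_le (k := 2)
    (by rwa [finrank_euclideanSpace_fin]) (WithLp.toLp 2 ξ : EuclideanSpace ℝ (Fin n))
  have dot (x y : EuclideanSpace ℝ (Fin n)) : ⟪x, y⟫ = ∑ j, x j * y j := by
    simp [PiLp.inner_apply, mul_comm]
  have normSq (i : Fin 2) : ∑ j, v i j ^ 2 = 1 := by
    simp only [sq, ← dot, real_inner_self_eq_norm_sq, hv.1 i, mul_one]
  refine ⟨v 0, v 1, normSq 0, normSq 1, ?_, ?_, ?_⟩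
  · simpa [dot] using hξv 0
  · simpa [dot] using hξv 1
  · simpa [dot] using hv.2 (by decide : (0 : Fin 2) ≠ 1)

theorem ae_eq_zero_of_fourierIntegral_eq_zero {V : Type*} [NormedAddCommGroup V]
    [InnerProductSpace ℝ V] [FiniteDimensional ℝ V] [MeasurableSpace V] [BorelSpace V]
    {μ : Measure V} [SigmaFinite μ] {F : V → ℂ} (hF : Integrable F μ)
    (h : ∀ w, VectorFourier.fourierIntegral 𝐞 μ (innerₗ V) F w = 0) :
    ∀ᵐ x ∂μ, F x = 0 := by
  refine ae_eq_zero_of_integral_contDiff_smul_eq_zero hF.locallyIntegrable fun g hg hgs => ?_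
  let φ : 𝓢(V, ℂ) := (hgs.comp_left ofReal_zero).toSchwartzMap (ofRealCLM.contDiff.comp hg)
  let ψ : 𝓢(V, ℂ) := 𝓕⁻ φ
  have hψ : 𝓕 (ψ : V → ℂ) = φ := by
    rw [← SchwartzMap.fourier_coe, FourierTransform.fourier_fourierInv_eq]
  calc ∫ x, g x • F x ∂μ = ∫ x, F x • 𝓕 (ψ : V → ℂ) x ∂μ := by
        simp only [hψ, smul_eq_mul, real_smul, mul_comm]
        rfl
    _ = ∫ w, VectorFourier.fourierIntegral 𝐞 μ (innerₗ V) F w • ψ w := by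
        rw [VectorFourier.integral_fourierIntegral_smul_eq_flip Real.continuous_fourierChar
          continuous_inner hF ψ.integrable, flip_innerₗ]
        rfl
    _ = 0 := by simp [h]

theorem fourierChar_neg_inner_toLp {n : ℕ} (x : Fin n → ℝ) (w : EuclideanSpace ℝ (Fin n)) :
    (𝐞 (-⟪WithLp.toLp 2 x, w⟫) : ℂ) = exp (-I * ∑ j, (x j : ℂ) * ((2 * Real.pi * w j : ℝ) : ℂ)) := by
  simp only [Real.fourierChar_apply, PiLp.inner_apply, RCLike.inner_apply', conj_trivial]
  push_cast
  simp only [Finset.mul_sum, Finset.sum_mul, Finset.sum_neg_distrib, mul_neg, neg_mul]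
  exact congrArg _ (congrArg _ (Finset.sum_congr rfl fun j _ => by ring))

theorem ae_eq_zero_of_integral_mul_cexp_eq_zero {n : ℕ} {μ : Measure (Fin n → ℝ)}
    [SigmaFinite μ] {q : (Fin n → ℝ) → ℂ} (hq : Integrable q μ)
    (h : ∀ ξ : Fin n → ℝ, ∫ x, q x * exp (-I * ∑ j, (x j : ℂ) * (ξ j : ℂ)) ∂μ = 0) :
    ∀ᵐ x ∂μ, q x = 0 := by
  let e := MeasurableEquiv.toLp 2 (Fin n → ℝ)
  have : SigmaFinite (μ.map e) := e.sigmaFinite_map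
  have hqe : Integrable (q ∘ e.symm) (μ.map e) := by
    rwa [integrable_map_equiv]
  have hFT (w : EuclideanSpace ℝ (Fin n)) :
      VectorFourier.fourierIntegral 𝐞 (μ.map e) (innerₗ _) (q ∘ e.symm) w = 0 := by
    rw [VectorFourier.fourierIntegral, integral_map_equiv]
    simp only [e, innerₗ_apply_apply, Function.comp_apply, MeasurableEquiv.coe_toLp,
      Circle.smul_def, fourierChar_neg_inner_toLp, smul_eq_mul, mul_comm _ (q _)]
    exact h _
  exact e.measurableEmbedding.ae_map_iff.1 (ae_eq_zero_of_fourierIntegral_eq_zero hqe hFT)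

theorem stmt16_general (n : ℕ) (Ω : Set (Fin n → ℝ)) (hΩb : Bornology.IsBounded Ω)
    (q : (Fin n → ℝ) → ℂ)
    (hq : MemLp q ⊤ (volume.restrict Ω))
    (H : ∀ ξ α β : Fin n → ℝ,
      (∑ j, (α j) ^ 2 = 1) → (∑ j, (β j) ^ 2 = 1) →
      (∑ j, ξ j * α j = 0) → (∑ j, ξ j * β j = 0) → (∑ j, α j * β j = 0) →
      ∀ r₁ r₂ : ℝ → (Fin n → ℝ) → ℂ,
        (∀ ε > (0 : ℝ), ∃ δ > (0 : ℝ), ∀ h : ℝ, 0 < h → h < δ →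
          ∀ x ∈ Ω, ‖r₁ h x‖ ≤ ε ∧ ‖r₂ h x‖ ≤ ε) →
        ∀ h : ℝ, 0 < h →
          ∫ x in Ω, q x *
            (Complex.exp ((∑ j, (x j : ℂ) * ((α j : ℂ) + Complex.I * (β j : ℂ))) / (h : ℂ)) *
              (Complex.exp (-Complex.I * ∑ j, (x j : ℂ) * (ξ j : ℂ)) + r₁ h x)) *
            (Complex.exp (-(∑ j, (x j : ℂ) * ((α j : ℂ) + Complex.I * (β j : ℂ))) / (h : ℂ)) *
              (1 + r₂ h x)) = 0) :
    (∀ ξ α β : Fin n → ℝ,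
      (∑ j, (α j) ^ 2 = 1) → (∑ j, (β j) ^ 2 = 1) →
      (∑ j, ξ j * α j = 0) → (∑ j, ξ j * β j = 0) → (∑ j, α j * β j = 0) →
      ∫ x in Ω, q x * Complex.exp (-Complex.I * ∑ j, (x j : ℂ) * (ξ j : ℂ)) = 0) ∧
    (3 ≤ n → ∀ᵐ x ∂(volume.restrict Ω), q x = 0) := by
  refine (and_iff_left_of_imp fun fourier_vanishes hn => ?ae_zero).2
    fun ξ α β hα hβ hξα hξβ hαβ => ?vanishing
  case vanishing =>
    simpa [mul_assoc, mul_left_comm, neg_div, ← Complex.exp_add] using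
      H ξ α β hα hβ hξα hξβ hαβ 0 0 (fun ε hε => ⟨1, one_pos, fun _ _ _ _ _ => by simp [hε.le]⟩)
        1 one_pos
  case ae_zero =>
    have : IsFiniteMeasure (volume.restrict Ω) :=
      isFiniteMeasure_restrict.2 hΩb.measure_lt_top.ne
    refine ae_eq_zero_of_integral_mul_cexp_eq_zero (hq.integrable le_top) fun ξ => ?_
    obtain ⟨α, β, hα, hβ, hξα, hξβ, hαβ⟩ := exists_orthonormal_pair_orthogonal_coords hn ξ
    exact fourier_vanishes ξ α β hα hβ hξα hξβ hαβ

/-- Recovery of the potential from integral identities against products of CGO-type functions: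
if `∫_Ω q v w dx = 0` for all pairs `v, w` of the indicated exponential form with remainders
tending to `0` in `L^∞(Ω)` as `h → 0⁺`, then the Fourier transform of `q` vanishes at every
admissible frequency `ξ`; in particular, if `n ≥ 3`, then `q = 0` a.e. in `Ω`. -/
theorem stmt16 (n : ℕ) (Ω : Set (Fin n → ℝ)) (hΩo : IsOpen Ω)
    (hΩb : Bornology.IsBounded Ω)
    (q : (Fin n → ℝ) → ℂ)
    (hq : MemLp q ⊤ (volume.restrict Ω))
    (H : ∀ ξ α β : Fin n → ℝ,
      (∑ j, (α j) ^ 2 = 1) → (∑ j, (β j) ^ 2 = 1) →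
      (∑ j, ξ j * α j = 0) → (∑ j, ξ j * β j = 0) → (∑ j, α j * β j = 0) →
      ∀ r₁ r₂ : ℝ → (Fin n → ℝ) → ℂ,
        (∀ ε > (0 : ℝ), ∃ δ > (0 : ℝ), ∀ h : ℝ, 0 < h → h < δ →
          ∀ x ∈ Ω, ‖r₁ h x‖ ≤ ε ∧ ‖r₂ h x‖ ≤ ε) →
        ∀ h : ℝ, 0 < h →
          ∫ x in Ω, q x *
            (Complex.exp ((∑ j, (x j : ℂ) * ((α j : ℂ) + Complex.I * (β j : ℂ))) / (h : ℂ)) *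
              (Complex.exp (-Complex.I * ∑ j, (x j : ℂ) * (ξ j : ℂ)) + r₁ h x)) *
            (Complex.exp (-(∑ j, (x j : ℂ) * ((α j : ℂ) + Complex.I * (β j : ℂ))) / (h : ℂ)) *
              (1 + r₂ h x)) = 0) :
    (∀ ξ α β : Fin n → ℝ,
      (∑ j, (α j) ^ 2 = 1) → (∑ j, (β j) ^ 2 = 1) →
      (∑ j, ξ j * α j = 0) → (∑ j, ξ j * β j = 0) → (∑ j, α j * β j = 0) →
      ∫ x in Ω, q x * Complex.exp (-Complex.I * ∑ j, (x j : ℂ) * (ξ j : ℂ)) = 0) ∧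
    (3 ≤ n → ∀ᵐ x ∂(volume.restrict Ω), q x = 0) :=
  stmt16_general n Ω hΩb q hq H
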